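/- Let n ≥ 4 and let r, r' be integers with 1 ≤ r < r' and 2r' ≤ n. Then in S_n the following relation holds: t_{2r} · t_{2r'} = v_{2r} · ∏_{i=r}^{r'-1} (t_{2i+1}^{-1} · u_{2i+2}), where the product is taken over i = r, r+1, ..., r'-1 in increasing order. -/

import Mathlib

/- We work in the symmetric group on `Fin n` (representing `{1, ..., n}` via `i ↦ i - 1`).
The paper multiplies permutations left-to-right: `(π₁ · π₂)(i) = π₂(π₁(i))`,
while Mathlib's `*` on `Equiv.Perm` is function composition: `(π₁ * π₂)(i) = π₁(π₂(i))`.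
Hence a paper product `A · B · C` is rendered below as `C * B * A`. -/

/-- `sP n i` is the transposition `sᵢ = (i, i+1)` (1-indexed), for `1 ≤ i ≤ n - 1`. -/
def sP (n i : ℕ) : Equiv.Perm (Fin n) :=
  if h : 1 ≤ i ∧ i < n then
    Equiv.swap ⟨i - 1, lt_of_le_of_lt (Nat.sub_le i 1) h.2⟩ ⟨i, h.2⟩
  else 1

/-- `tP n m` is `t_m = s₁ · s₂ ⋯ s_{m-1}` (paper's left-to-right product, so here the
factor for larger index is multiplied on the left).  `tP n 0 = tP n 1 = 1`. -/
def tP (n m : ℕ) : Equiv.Perm (Fin n) :=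
  (List.range (m - 1)).foldl (fun g j => sP n (j + 1) * g) 1

/-- `uP n r` is `u_{2r} = t_{2r-2} · s_{2r-1}` (paper order; here reversed). -/
def uP (n r : ℕ) : Equiv.Perm (Fin n) := sP n (2 * r - 1) * tP n (2 * r - 2)

/-- `vP n r` is `v_{2r} = t_{2r}²`. -/
def vP (n r : ℕ) : Equiv.Perm (Fin n) := (tP n (2 * r)) ^ 2

/- In the paper's order, `t_{k+1} = t_k · s_k` and `u_{2m+2} = t_{2m} · s_{2m+1}`, so each factor
`t_{2m+1}⁻¹ · u_{2m+2} = s_{2m}⁻¹ t_{2m}⁻¹ · t_{2m} s_{2m+1} = s_{2m} s_{2m+1}` turns `t_{2m}` into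
`t_{2m+2}`. The product telescopes to `t_{2r} · ∏ = t_{2r'}`, and multiplying on the left by
`t_{2r}` gives the relation, with `v_{2r} = t_{2r}²`. -/

lemma sP_inv (n i : ℕ) : (sP n i)⁻¹ = sP n i := by
  unfold sP
  split
  · exact Equiv.swap_inv _ _
  · exact inv_one

lemma tP_succ (n k : ℕ) : tP n (k + 1) = sP n k * tP n k := by
  cases k with
  | zero => simp [tP, sP]
  | succ j => simp [tP, List.range_succ]

lemma tP_two_mul_add_two (n m : ℕ) :
    tP n (2 * (m + 1)) = uP n (m + 1) * (tP n (2 * m + 1))⁻¹ * tP n (2 * m) := by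
  have hu : uP n (m + 1) = sP n (2 * m + 1) * tP n (2 * m) := rfl
  rw [hu, mul_add_one, tP_succ, tP_succ, mul_inv_rev, sP_inv]
  group

lemma List.foldl_range_mul_telescope {G : Type*} [Monoid G] (g a : ℕ → G)
    (h : ∀ k, g (k + 1) = a k * g k) (r d : ℕ) :
    g (r + d) = (List.range d).foldl (fun acc j => a (r + j) * acc) 1 * g r := by
  induction d with
  | zero => simp
  | succ d ih =>
    rw [← add_assoc, h, ih, List.range_succ, List.foldl_append]
    simp [mul_assoc]

theorem rel_t_v_prod_general (n r r' : ℕ) (hrr : r < r') :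
    tP n (2 * r') * tP n (2 * r) =
      ((List.range (r' - r)).foldl
        (fun acc j => uP n (r + j + 1) * (tP n (2 * (r + j) + 1))⁻¹ * acc) 1) * vP n r := by
  obtain ⟨d, rfl⟩ : ∃ d, r' = r + d := ⟨r' - r, by omega⟩
  rw [Nat.add_sub_cancel_left, vP, sq, ← mul_assoc,
    ← List.foldl_range_mul_telescope (fun m => tP n (2 * m)) _ (tP_two_mul_add_two n) r d]

/-- for `1 ≤ r < r'` with `2r' ≤ n`,
`t_{2r} · t_{2r'} = v_{2r} · ∏_{i=r}^{r'-1} (t_{2i+1}⁻¹ · u_{2i+2})` (paper left-to-right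
product over `i` increasing; rendered here in composition order, so each new factor is
multiplied on the left and `v_{2r}` ends up rightmost).  The index `j ∈ range (r'-r)`
corresponds to `i = r + j`, `uP n (i+1) = u_{2i+2}`, and `vP n r = v_{2r}`. -/
theorem rel_t_v_prod (n r r' : ℕ) (hn : 4 ≤ n) (hr : 1 ≤ r) (hrr : r < r')
    (hrn : 2 * r' ≤ n) :
    tP n (2 * r') * tP n (2 * r) =
      ((List.range (r' - r)).foldl
        (fun acc j => uP n (r + j + 1) * (tP n (2 * (r + j) + 1))⁻¹ * acc) 1) * vP n r :=
  rel_t_v_prod_general n r r' hrr
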